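/- Let (N1,v1) be the game on N1 = {1,2,3} with v1 of all singletons 0, v1({1,2}) = 1, v1({1,3}) = 2, v1({2,3}) = 3, v1({1,2,3}) = 5; let (N2,v2) be the game on N2 = {4,5} with singletons 0 and v2({4,5}) = 3; and let (N,v) be their composition on N = {1,2,3,4,5}, i.e. v(S) = v1(S ∩ N1) + v2(S ∩ N2). Then v1, v2 and v are convex games, τ(v1) = (10/9, 15/9, 20/9), τ(v2) = (3/2, 3/2), τ(v) = (16/15, 24/15, 32/15, 24/15, 24/15), and hence τ(v) is NOT equal to the concatenation of τ(v1) and τ(v2); i.e., the tau-value is not decomposable on the class of convex games. -/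

import Mathlib

open Finset

/-- A population monotonic allocation scheme (PMAS) for the TU game `w` on the
finite player set `α`: subgame efficiency on every nonempty coalition, and
individual payoff monotonicity along coalition inclusion. -/
def IsPMAS {α : Type*} [Fintype α] (w : Finset α → ℝ) (x : Finset α → α → ℝ) : Prop :=
  (∀ S : Finset α, S.Nonempty → ∑ i ∈ S, x S i = w S) ∧
  (∀ S T : Finset α, S ⊆ T → ∀ i ∈ S, x S i ≤ x T i)

/-- `μ` is a matching inside coalition `S`: every pair uses players of `S`,
and each player appears in at most one pair. -/
def IsMatching {I J : Type*} (S : Finset (I ⊕ J)) (μ : Finset (I × J)) : Prop :=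
  (∀ p ∈ μ, Sum.inl p.1 ∈ S ∧ Sum.inr p.2 ∈ S) ∧
  (∀ p ∈ μ, ∀ q ∈ μ, p.1 = q.1 → p = q) ∧
  (∀ p ∈ μ, ∀ q ∈ μ, p.2 = q.2 → p = q)

/-- The assignment game induced by the matrix `A`. -/
noncomputable def assignGame {I J : Type*} [Fintype I] [Fintype J]
    (A : I → J → ℝ) (S : Finset (I ⊕ J)) : ℝ :=
  sSup ((fun μ : Finset (I × J) => ∑ p ∈ μ, A p.1 p.2) '' {μ | IsMatching S μ})

/-- `x` is a core allocation of the game `w`. -/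
def InCore {α : Type*} [Fintype α] (w : Finset α → ℝ) (x : α → ℝ) : Prop :=
  (∑ i, x i) = w Finset.univ ∧ ∀ S : Finset α, w S ≤ ∑ i ∈ S, x i

/-- `x` is PMAS-extendable in the game `w`. -/
def PMASExtendable {α : Type*} [Fintype α] (w : Finset α → ℝ) (x : α → ℝ) : Prop :=
  ∃ y, IsPMAS w y ∧ ∀ i, y Finset.univ i = x i

/-- The upper (utopia) vector. -/
noncomputable def upperVec {α : Type*} [Fintype α] [DecidableEq α]
    (v : Finset α → ℝ) (i : α) : ℝ :=
  v Finset.univ - v (Finset.univ.erase i)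

/-- The lower (minimal right) vector. -/
noncomputable def lowerVec {α : Type*} [Fintype α] [DecidableEq α]
    (v : Finset α → ℝ) (i : α) : ℝ :=
  sSup {t | ∃ S : Finset α, i ∈ S ∧ t = v S - ∑ j ∈ S.erase i, upperVec v j}

/-- `τ` is a tau-value of the game `v`. -/
def IsTauValue {α : Type*} [Fintype α] [DecidableEq α] (v : Finset α → ℝ) (τ : α → ℝ) : Prop :=
  ∃ κ : ℝ, 0 ≤ κ ∧ κ ≤ 1 ∧ (∀ i, τ i = κ * upperVec v i + (1 - κ) * lowerVec v i) ∧
    ∑ i, τ i = v Finset.univ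

open scoped Classical in
/-- The nondecreasingly ordered list of satisfactions of the nonempty proper
coalitions at allocation `x`. -/
noncomputable def satList {α : Type*} [Fintype α] (v : Finset α → ℝ) (x : α → ℝ) : List ℝ :=
  ((Finset.univ.filter (fun S : Finset α => S.Nonempty ∧ S ≠ Finset.univ)).val.map
    (fun S => ∑ i ∈ S, x i - v S)).sort (· ≤ ·)

/-- `x` is the nucleolus of `v`: a core allocation lexicographically maximizing
the nondecreasingly ordered satisfaction vector over the core. -/
noncomputable def IsNucleolus {α : Type*} [Fintype α] (v : Finset α → ℝ) (x : α → ℝ) : Prop :=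
  InCore v x ∧ ∀ y, InCore v y →
    satList v y = satList v x ∨ List.Lex (· < ·) (satList v y) (satList v x)

/-- `A` has Γ-shaped support with corner `(i1, j1)`. -/
def GammaShaped {I J : Type*} (A : I → J → ℝ) (i1 : I) (j1 : J) : Prop :=
  (∀ k l, (k = i1 ∨ l = j1) → 0 < A k l) ∧ (∀ k l, k ≠ i1 → l ≠ j1 → A k l = 0)

/-- The corner `(i1, j1)` of `A` is dominant. -/
def DominantCorner {I J : Type*} (A : I → J → ℝ) (i1 : I) (j1 : J) : Prop :=
  ∀ k l, k ≠ i1 → l ≠ j1 → A i1 l + A k j1 ≤ A i1 j1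

/-- Convexity of a TU game. -/
def IsConvexGame {α : Type*} [Fintype α] [DecidableEq α] (v : Finset α → ℝ) : Prop :=
  ∀ i : α, ∀ S T : Finset α, S ⊆ T → i ∉ T →
    v (insert i S) - v S ≤ v (insert i T) - v T

/-- The 3-player game of Example `exam-tau-nondecomp` (players 1,2,3 as `0,1,2`):
singletons worth 0, `v({1,2}) = 1`, `v({1,3}) = 2`, `v({2,3}) = 3`, `v(N) = 5`. -/
def gameV1 : Finset (Fin 3) → ℝ := fun S =>
  if S = {0, 1} then 1
  else if S = {0, 2} then 2
  else if S = {1, 2} then 3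
  else if S = Finset.univ then 5
  else 0

/-- The 2-player game (players 4,5 as `0,1`): singletons worth 0, `v({4,5}) = 3`. -/
def gameV2 : Finset (Fin 2) → ℝ := fun S =>
  if S = Finset.univ then 3 else 0

/-- The composition of `gameV1` and `gameV2` on the disjoint union of their
player sets. -/
noncomputable def gameV : Finset (Fin 3 ⊕ Fin 2) → ℝ := fun S =>
  gameV1 S.toLeft + gameV2 S.toRight

-- Auxiliary rational versions and computations
def gameV1Q : Finset (Fin 3) → ℤ := fun S =>
  if S = {0, 1} then 1
  else if S = {0, 2} then 2
  else if S = {1, 2} then 3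
  else if S = Finset.univ then 5
  else 0

def gameV2Q : Finset (Fin 2) → ℤ := fun S =>
  if S = Finset.univ then 3 else 0

def gameVQ : Finset (Fin 3 ⊕ Fin 2) → ℤ := fun S =>
  gameV1Q S.toLeft + gameV2Q S.toRight

lemma gameV1_cast (S : Finset (Fin 3)) : gameV1 S = (gameV1Q S : ℝ) := by
  unfold gameV1 gameV1Q; split_ifs <;> norm_num

lemma gameV2_cast (S : Finset (Fin 2)) : gameV2 S = (gameV2Q S : ℝ) := by
  unfold gameV2 gameV2Q; split_ifs <;> norm_num

lemma gameV_cast (S : Finset (Fin 3 ⊕ Fin 2)) : gameV S = (gameVQ S : ℝ) := by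
  unfold gameV gameVQ; rw [gameV1_cast, gameV2_cast]; push_cast; ring

def M1Q : Fin 3 → ℤ := ![2, 3, 4]
def M2Q : Fin 2 → ℤ := ![3, 3]
def MQV : Fin 3 ⊕ Fin 2 → ℤ := Sum.elim M1Q M2Q

lemma uv1 (i : Fin 3) : upperVec gameV1 i = (M1Q i : ℝ) := by
  have h : ∀ i : Fin 3, gameV1Q Finset.univ - gameV1Q (Finset.univ.erase i) = M1Q i := by decide
  unfold upperVec; rw [gameV1_cast, gameV1_cast, ← h i]; push_cast; ring

lemma uv2 (i : Fin 2) : upperVec gameV2 i = (M2Q i : ℝ) := by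
  have h : ∀ i : Fin 2, gameV2Q Finset.univ - gameV2Q (Finset.univ.erase i) = M2Q i := by decide
  unfold upperVec; rw [gameV2_cast, gameV2_cast, ← h i]; push_cast; ring

lemma uvV (i : Fin 3 ⊕ Fin 2) : upperVec gameV i = (MQV i : ℝ) := by
  have h : ∀ i : Fin 3 ⊕ Fin 2, gameVQ Finset.univ - gameVQ (Finset.univ.erase i) = MQV i := by decide
  unfold upperVec; rw [gameV_cast, gameV_cast, ← h i]; push_cast; ring

lemma lv1 (i : Fin 3) : lowerVec gameV1 i = 0 := by
  have hs : ∀ j : Fin 3, gameV1Q {j} = 0 := by decide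
  have key : ∀ (i : Fin 3) (S : Finset (Fin 3)), i ∈ S →
      gameV1Q S - ∑ j ∈ S.erase i, M1Q j ≤ 0 := by decide
  unfold lowerVec
  apply IsGreatest.csSup_eq
  constructor
  · exact ⟨{i}, Finset.mem_singleton_self i, by
      rw [Finset.erase_singleton, Finset.sum_empty, gameV1_cast, hs i]; norm_num⟩
  · rintro t ⟨S, hiS, rfl⟩
    calc gameV1 S - ∑ j ∈ S.erase i, upperVec gameV1 j
        = ((gameV1Q S - ∑ j ∈ S.erase i, M1Q j : ℤ) : ℝ) := by
          rw [gameV1_cast]; push_cast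
          simp only [uv1]
      _ ≤ 0 := by exact_mod_cast key i S hiS

lemma lv2 (i : Fin 2) : lowerVec gameV2 i = 0 := by
  have hs : ∀ j : Fin 2, gameV2Q {j} = 0 := by decide
  have key : ∀ (i : Fin 2) (S : Finset (Fin 2)), i ∈ S →
      gameV2Q S - ∑ j ∈ S.erase i, M2Q j ≤ 0 := by decide
  unfold lowerVec
  apply IsGreatest.csSup_eq
  constructor
  · exact ⟨{i}, Finset.mem_singleton_self i, by
      rw [Finset.erase_singleton, Finset.sum_empty, gameV2_cast, hs i]; norm_num⟩
  · rintro t ⟨S, hiS, rfl⟩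
    calc gameV2 S - ∑ j ∈ S.erase i, upperVec gameV2 j
        = ((gameV2Q S - ∑ j ∈ S.erase i, M2Q j : ℤ) : ℝ) := by
          rw [gameV2_cast]; push_cast
          simp only [uv2]
      _ ≤ 0 := by exact_mod_cast key i S hiS

lemma lvV (i : Fin 3 ⊕ Fin 2) : lowerVec gameV i = 0 := by
  have hs : ∀ j : Fin 3 ⊕ Fin 2, gameVQ {j} = 0 := by decide
  have key : ∀ (i : Fin 3 ⊕ Fin 2) (S : Finset (Fin 3 ⊕ Fin 2)), i ∈ S →
      gameVQ S - ∑ j ∈ S.erase i, MQV j ≤ 0 := by decide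
  unfold lowerVec
  apply IsGreatest.csSup_eq
  constructor
  · exact ⟨{i}, Finset.mem_singleton_self i, by
      rw [Finset.erase_singleton, Finset.sum_empty, gameV_cast, hs i]; norm_num⟩
  · rintro t ⟨S, hiS, rfl⟩
    calc gameV S - ∑ j ∈ S.erase i, upperVec gameV j
        = ((gameVQ S - ∑ j ∈ S.erase i, MQV j : ℤ) : ℝ) := by
          rw [gameV_cast]; push_cast
          simp only [uvV]
      _ ≤ 0 := by exact_mod_cast key i S hiS


lemma convex1 : IsConvexGame gameV1 := by
  have key : ∀ (i : Fin 3) (S T : Finset (Fin 3)), S ⊆ T → i ∉ T →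
      gameV1Q (insert i S) - gameV1Q S ≤ gameV1Q (insert i T) - gameV1Q T := by decide
  intro i S T hST hiT
  simp only [gameV1_cast]
  exact_mod_cast key i S T hST hiT

lemma convex2 : IsConvexGame gameV2 := by
  have key : ∀ (i : Fin 2) (S T : Finset (Fin 2)), S ⊆ T → i ∉ T →
      gameV2Q (insert i S) - gameV2Q S ≤ gameV2Q (insert i T) - gameV2Q T := by decide
  intro i S T hST hiT
  simp only [gameV2_cast]
  exact_mod_cast key i S T hST hiT

lemma convexV : IsConvexGame gameV := by
  have key : ∀ (i : Fin 3 ⊕ Fin 2) (S T : Finset (Fin 3 ⊕ Fin 2)), S ⊆ T → i ∉ T →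
      gameVQ (insert i S) - gameVQ S ≤ gameVQ (insert i T) - gameVQ T := by decide
  intro i S T hST hiT
  simp only [gameV_cast]
  exact_mod_cast key i S T hST hiT

lemma tau1 : IsTauValue gameV1 ![10 / 9, 15 / 9, 20 / 9] := by
  refine ⟨5 / 9, by norm_num, by norm_num, fun i => ?_, ?_⟩
  · rw [uv1, lv1]
    fin_cases i <;> simp [M1Q] <;> norm_num
  · rw [gameV1_cast, show gameV1Q Finset.univ = 5 from by decide]
    rw [Fin.sum_univ_three]
    norm_num [Matrix.cons_val_two, Matrix.cons_val_zero, Matrix.cons_val_one, Matrix.head_cons, Matrix.tail_cons]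

lemma tau2 : IsTauValue gameV2 ![3 / 2, 3 / 2] := by
  refine ⟨1 / 2, by norm_num, by norm_num, fun i => ?_, ?_⟩
  · rw [uv2, lv2]
    fin_cases i <;> simp [M2Q] <;> norm_num
  · rw [gameV2_cast, show gameV2Q Finset.univ = 3 from by decide]
    rw [Fin.sum_univ_two]
    norm_num

lemma tauV : IsTauValue gameV (Sum.elim ![16 / 15, 24 / 15, 32 / 15] ![24 / 15, 24 / 15]) := by
  refine ⟨8 / 15, by norm_num, by norm_num, fun i => ?_, ?_⟩
  · rw [uvV, lvV]
    rcases i with i | i <;> fin_cases i <;> simp [MQV, M1Q, M2Q] <;> norm_num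
  · rw [gameV_cast, show gameVQ Finset.univ = 8 from by decide]
    rw [Fintype.sum_sum_type, Fin.sum_univ_three, Fin.sum_univ_two]
    simp only [Sum.elim_inl, Sum.elim_inr]
    norm_num [Matrix.cons_val_two, Matrix.cons_val_zero, Matrix.cons_val_one, Matrix.head_cons, Matrix.tail_cons]


/-- `gameV1`, `gameV2` and their composition `gameV` are convex,
their tau-values are `(10/9, 15/9, 20/9)`, `(3/2, 3/2)` and
`(16/15, 24/15, 32/15, 24/15, 24/15)` respectively, and the tau-value of the
composite game is not the concatenation of the component tau-values: the
tau-value is not decomposable on the class of convex games. -/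
theorem tau_not_decomposable_on_convex :
    IsConvexGame gameV1 ∧ IsConvexGame gameV2 ∧ IsConvexGame gameV ∧
    IsTauValue gameV1 ![10 / 9, 15 / 9, 20 / 9] ∧
    IsTauValue gameV2 ![3 / 2, 3 / 2] ∧
    IsTauValue gameV (Sum.elim ![16 / 15, 24 / 15, 32 / 15] ![24 / 15, 24 / 15]) ∧
    (Sum.elim ![(16 : ℝ) / 15, 24 / 15, 32 / 15] ![(24 : ℝ) / 15, 24 / 15] : Fin 3 ⊕ Fin 2 → ℝ) ≠
      Sum.elim ![(10 : ℝ) / 9, 15 / 9, 20 / 9] ![(3 : ℝ) / 2, 3 / 2] := by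
  refine ⟨convex1, convex2, convexV, tau1, tau2, tauV, fun h => ?_⟩
  have := congrFun h (Sum.inl 0)
  simp at this
  norm_num at this
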